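/- Let (X,ρ) be a Polish metric space, μ a probability measure on X, and n ≥ 1. Let A be a set of probability measures on X such that {x ∈ Xⁿ : L_n^x ∈ A} is measurable, where L_n^x = n⁻¹ Σᵢ₌₁ⁿ δ_{xⁱ}. Let ν be a probability measure on X absolutely continuous with respect to μ, with H(ν|μ) < ∞ and ν⊗ⁿ(L_n ∈ A) := ν⊗ⁿ{x : L_n^x ∈ A} > 0. Then (1/n)·log( μ⊗ⁿ(L_n ∈ A) · e^{n·H(ν|μ)} ) ≥ −H(ν|μ)·ν⊗ⁿ(L_n ∈ Aᶜ)/ν⊗ⁿ(L_n ∈ A) + (1/n)·log ν⊗ⁿ(L_n ∈ A) − 1/(n·e·ν⊗ⁿ(L_n ∈ A)). -/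

import Mathlib

open MeasureTheory Filter Set
open scoped ENNReal NNReal Topology Pointwise Classical

noncomputable section

/-- Optimal transportation cost for cost function `c`, infimum over couplings. -/
def transportCost {α : Type*} [MeasurableSpace α] (c : α → α → ℝ≥0∞)
    (ν₁ ν₂ : Measure α) : ℝ≥0∞ :=
  ⨅ (π : Measure (α × α)) (_ : π.fst = ν₁ ∧ π.snd = ν₂), ∫⁻ p, c p.1 p.2 ∂π

/-- Relative entropy `H(ν|μ)`. -/
def relEntropy {α : Type*} [MeasurableSpace α] (ν μ : Measure α) : ℝ≥0∞ :=
  if ν ≪ μ ∧ Integrable (fun x => Real.log ((ν.rnDeriv μ x).toReal)) ν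
  then ENNReal.ofReal (∫ x, Real.log ((ν.rnDeriv μ x).toReal) ∂ν)
  else ∞

/-- Empirical measure of the tuple `x`. -/
def empMeasure {α : Type*} [MeasurableSpace α] {n : ℕ} (x : Fin n → α) : Measure α :=
  (n : ℝ≥0∞)⁻¹ • ∑ i, Measure.dirac (x i)

/-- Wasserstein distance of order `p`. -/
def Wp {α : Type*} [PseudoEMetricSpace α] [MeasurableSpace α] (p : ℝ)
    (ν₁ ν₂ : Measure α) : ℝ :=
  ((transportCost (fun x y => edist x y ^ p) ν₁ ν₂) ^ (1 / p)).toReal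

/-- Length of the gradient `|∇f|(x)`. -/
def gradLen {α : Type*} [MetricSpace α] (f : α → ℝ) (x : α) : ℝ :=
  Filter.limsup (fun y => |f x - f y| / dist x y) (𝓝[≠] x)

/-- Subgradient norm `|∇⁻f|(x)`. -/
def subGradLen {α : Type*} [MetricSpace α] (f : α → ℝ) (x : α) : ℝ :=
  Filter.limsup (fun y => max (f y - f x) 0 / dist x y) (𝓝[≠] x)

/-- Entropy functional `Ent_μ(g)`. -/
def entFun {α : Type*} [MeasurableSpace α] (μ : Measure α) (g : α → ℝ) : ℝ :=
  ∫ x, g x * Real.log (g x) ∂μ - (∫ x, g x ∂μ) * Real.log (∫ x, g x ∂μ)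

/-- Logarithmic Sobolev inequality `LSI(C)`. -/
def LSI {α : Type*} [MetricSpace α] [MeasurableSpace α] (μ : Measure α) (C : ℝ) : Prop :=
  ∀ f : α → ℝ, LocallyLipschitz f →
    entFun μ (fun x => (f x) ^ 2) ≤ C * ∫ x, (gradLen f x) ^ 2 ∂μ


/-! Write `P = μ^⊗n`, `Q = ν^⊗n` and `B = {L_n ∈ A}`. The density `dQ/dP` is the product of the
one-dimensional densities, so `∫ log (dQ/dP) dQ = n H(ν|μ)`. Restricted to `B`, the log-sum
inequality gives `Q(B) log (Q(B)/P(B)) ≤ ∫_B log (dQ/dP) dQ`; on `Bᶜ` the same inequality and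
`t log t ≥ -1/e` give `∫_{Bᶜ} log (dQ/dP) dQ ≥ -1/e`. Adding up,
`log P(B) ≥ log Q(B) - (n H(ν|μ) + 1/e) / Q(B)`, which rearranges to the claim. -/

open Real InformationTheory

lemma Real.neg_inv_exp_le_mul_log {x : ℝ} (hx : 0 ≤ x) : -(exp 1)⁻¹ ≤ x * log x := by
  rcases hx.eq_or_lt with rfl | hx
  · simp [(exp_pos 1).le]
  -- `t - 1 ≤ t log t` at `t = e x`
  have h := self_sub_one_le_mul_log (mul_nonneg hx.le (exp_pos 1).le)
  rw [log_mul hx.ne' (exp_pos 1).ne', log_exp] at h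
  calc -(exp 1)⁻¹ = -1 / exp 1 := by ring
    _ ≤ x * log x := by rw [div_le_iff₀ (exp_pos 1)]; nlinarith

lemma Real.neg_inv_exp_le_mul_log_div {x y : ℝ} (hx : 0 ≤ x) (hy : 0 ≤ y) (hy1 : y ≤ 1) :
    -(exp 1)⁻¹ ≤ x * log (x / y) := by
  rcases hx.eq_or_lt with rfl | hx
  · simp [(exp_pos 1).le]
  rcases hy.eq_or_lt with rfl | hy
  · simp [(exp_pos 1).le]
  calc -(exp 1)⁻¹ ≤ x * log x := neg_inv_exp_le_mul_log hx.le
    _ ≤ x * log (x / y) := by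
      rw [log_div hx.ne' hy.ne']
      nlinarith [log_nonpos hy.le hy1]

namespace MeasureTheory

variable {α : Type*} [MeasurableSpace α] {μ ν : Measure α} {s : Set α}

lemma llr_restrict [μ.HaveLebesgueDecomposition ν] [SigmaFinite ν] (hμν : μ ≪ ν)
    (hs : MeasurableSet s) :
    llr (μ.restrict s) (ν.restrict s) =ᵐ[μ.restrict s] llr μ ν := by
  have h : μ.restrict s = (ν.restrict s).withDensity (μ.rnDeriv ν) := by
    rw [← restrict_withDensity hs, Measure.withDensity_rnDeriv_eq μ ν hμν]
  have hrn := Measure.rnDeriv_withDensity (ν.restrict s) (μ.measurable_rnDeriv ν)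
  rw [← h] at hrn
  filter_upwards [(hμν.restrict s).ae_le hrn] with x hx
  simp only [llr_def, hx]

variable [IsFiniteMeasure μ] [IsFiniteMeasure ν]

lemma mul_log_measureReal_div_le_setIntegral_llr (hμν : μ ≪ ν) (h_int : Integrable (llr μ ν) μ)
    (hs : MeasurableSet s) :
    μ.real s * log (μ.real s / ν.real s) ≤ ∫ x in s, llr μ ν x ∂μ := by
  have hllr := llr_restrict hμν hs
  have h := mul_log_le_toReal_klDiv (hμν.restrict s) ((h_int.restrict).congr hllr.symm)
  rw [toReal_klDiv (hμν.restrict s) ((h_int.restrict).congr hllr.symm), integral_congr_ae hllr]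
    at h
  simpa only [measureReal_restrict_apply_univ, add_sub_cancel_right, sub_le_sub_iff_right,
    add_le_add_iff_right] using h

lemma log_measureReal_sub_le_log_measureReal [IsProbabilityMeasure ν] (hμν : μ ≪ ν)
    (h_int : Integrable (llr μ ν) μ) (hs : MeasurableSet s) (hμs : 0 < μ s) :
    log (μ.real s) - (∫ x, llr μ ν x ∂μ + (exp 1)⁻¹) / μ.real s ≤ log (ν.real s) := by
  have hc : 0 < μ.real s := ENNReal.toReal_pos hμs.ne' (measure_ne_top μ s)
  have hp : 0 < ν.real s :=
    ENNReal.toReal_pos (fun h => hμs.ne' (hμν h)) (measure_ne_top ν s)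
  have hin := mul_log_measureReal_div_le_setIntegral_llr hμν h_int hs
  have hout : -(exp 1)⁻¹ ≤ ∫ x in sᶜ, llr μ ν x ∂μ :=
    (neg_inv_exp_le_mul_log_div measureReal_nonneg measureReal_nonneg measureReal_le_one).trans
      (mul_log_measureReal_div_le_setIntegral_llr hμν h_int hs.compl)
  have hsplit := integral_add_compl hs h_int
  rw [log_div hc.ne' hp.ne'] at hin
  rw [sub_le_comm, le_div_iff₀ hc]
  nlinarith

end MeasureTheory

open ProbabilityTheory

namespace MeasureTheory.Measure

variable {ι : Type*} [Fintype ι] {α : ι → Type*} [∀ i, MeasurableSpace (α i)]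
  {μ ν : ∀ i, Measure (α i)} [∀ i, IsProbabilityMeasure (μ i)] [∀ i, IsProbabilityMeasure (ν i)]

lemma pi_eq_withDensity_prod {f : ∀ i, α i → ℝ≥0∞} (hf : ∀ i, Measurable (f i))
    (hν : ∀ i, (μ i).withDensity (f i) = ν i) :
    Measure.pi ν = (Measure.pi μ).withDensity fun x => ∏ i, f i (x i) := by
  refine Measure.pi_eq (μ := ν) fun s hs => ?_
  have hbox : (univ.pi s).indicator (fun x => ∏ i, f i (x i))
      = fun x => ∏ i, (s i).indicator (f i) (x i) := by
    ext x
    by_cases hx : x ∈ univ.pi s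
    · rw [indicator_of_mem hx]
      exact Finset.prod_congr rfl fun i _ => (indicator_of_mem (hx i (mem_univ i)) _).symm
    · obtain ⟨i, -, hi⟩ := not_forall₂.mp hx
      rw [indicator_of_notMem hx,
        Finset.prod_eq_zero (Finset.mem_univ i) (indicator_of_notMem hi _)]
  rw [withDensity_apply _ (.univ_pi hs), ← lintegral_indicator (.univ_pi hs), hbox,
    lintegral_prod_eq_prod_lintegral_of_indepFun _ _
      (iIndepFun_pi fun i => ((hf i).indicator (hs i)).aemeasurable)
      fun i => ((hf i).indicator (hs i)).comp (measurable_pi_apply i)]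
  refine Finset.prod_congr rfl fun i _ => ?_
  rw [(measurePreserving_eval μ i).lintegral_comp ((hf i).indicator (hs i)),
    lintegral_indicator (hs i), ← withDensity_apply _ (hs i), hν]

lemma pi_eq_withDensity_prod_rnDeriv (hac : ∀ i, ν i ≪ μ i) :
    Measure.pi ν = (Measure.pi μ).withDensity fun x => ∏ i, (ν i).rnDeriv (μ i) (x i) :=
  pi_eq_withDensity_prod (fun i => (ν i).measurable_rnDeriv (μ i))
    fun i => withDensity_rnDeriv_eq _ _ (hac i)

lemma absolutelyContinuous_pi (hac : ∀ i, ν i ≪ μ i) : Measure.pi ν ≪ Measure.pi μ := by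
  rw [pi_eq_withDensity_prod_rnDeriv hac]
  exact withDensity_absolutelyContinuous _ _

lemma llr_pi (hac : ∀ i, ν i ≪ μ i) :
    llr (Measure.pi ν) (Measure.pi μ) =ᵐ[Measure.pi ν] fun x => ∑ i, llr (ν i) (μ i) (x i) := by
  have hrn : (Measure.pi ν).rnDeriv (Measure.pi μ)
      =ᵐ[Measure.pi μ] fun x => ∏ i, (ν i).rnDeriv (μ i) (x i) := by
    rw [pi_eq_withDensity_prod_rnDeriv hac]
    exact rnDeriv_withDensity _ (Finset.measurable_prod _ fun i _ =>
      ((ν i).measurable_rnDeriv (μ i)).comp (measurable_pi_apply i))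
  have hcoord : ∀ᵐ x ∂Measure.pi ν, ∀ i,
      0 < (ν i).rnDeriv (μ i) (x i) ∧ (ν i).rnDeriv (μ i) (x i) < ∞ :=
    ae_all_iff.2 fun i => tendsto_eval_ae_ae.eventually
      ((rnDeriv_pos (hac i)).and ((hac i).ae_le (rnDeriv_lt_top _ _)))
  filter_upwards [(absolutelyContinuous_pi hac).ae_le hrn, hcoord] with x hx hpos
  simp only [llr_def, hx, ENNReal.toReal_prod]
  rw [log_prod fun i _ => (ENNReal.toReal_pos (hpos i).1.ne' (hpos i).2.ne).ne']

lemma integrable_llr_pi (hac : ∀ i, ν i ≪ μ i)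
    (hint : ∀ i, Integrable (llr (ν i) (μ i)) (ν i)) :
    Integrable (llr (Measure.pi ν) (Measure.pi μ)) (Measure.pi ν) :=
  (integrable_finsetSum _ fun i _ => integrable_comp_eval (hint i)).congr (llr_pi hac).symm

lemma integral_llr_pi (hac : ∀ i, ν i ≪ μ i)
    (hint : ∀ i, Integrable (llr (ν i) (μ i)) (ν i)) :
    ∫ x, llr (Measure.pi ν) (Measure.pi μ) x ∂Measure.pi ν
      = ∑ i, ∫ x, llr (ν i) (μ i) x ∂ν i := by
  rw [integral_congr_ae (llr_pi hac),
    integral_finsetSum _ fun i _ => integrable_comp_eval (hint i)]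
  exact Finset.sum_congr rfl fun i _ =>
    integral_comp_eval (measurable_llr _ _).aestronglyMeasurable

end MeasureTheory.Measure

lemma relEntropy_eq_klDiv {α : Type*} [MeasurableSpace α] (ν μ : Measure α)
    [IsProbabilityMeasure ν] [IsProbabilityMeasure μ] : relEntropy ν μ = klDiv ν μ := by
  rw [relEntropy, klDiv_def]
  simp [llr_def]

theorem deuschel_stroock_lower_bound_general
    {X : Type*} [MeasurableSpace X]
    (μ ν : Measure X) [IsProbabilityMeasure μ] [IsProbabilityMeasure ν]
    (n : ℕ) (hn : 1 ≤ n) (A : Set (Measure X))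
    (hAmeas : MeasurableSet {x : Fin n → X | empMeasure x ∈ A})
    (hH : relEntropy ν μ < ∞)
    (hpos : 0 < (Measure.pi fun _ : Fin n => ν) {x | empMeasure x ∈ A}) :
    (1 / (n : ℝ)) * Real.log
        (((Measure.pi fun _ : Fin n => μ) {x | empMeasure x ∈ A}).toReal *
          Real.exp ((n : ℝ) * (relEntropy ν μ).toReal)) ≥
      -(relEntropy ν μ).toReal *
          ((Measure.pi fun _ : Fin n => ν) {x | empMeasure x ∉ A}).toReal /
          ((Measure.pi fun _ : Fin n => ν) {x | empMeasure x ∈ A}).toReal +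
        (1 / (n : ℝ)) * Real.log
          ((Measure.pi fun _ : Fin n => ν) {x | empMeasure x ∈ A}).toReal -
        1 / ((n : ℝ) * Real.exp 1 *
          ((Measure.pi fun _ : Fin n => ν) {x | empMeasure x ∈ A}).toReal) := by
  set P := Measure.pi fun _ : Fin n => μ
  set Q := Measure.pi fun _ : Fin n => ν
  set B := {x : Fin n → X | empMeasure x ∈ A}
  rw [relEntropy_eq_klDiv] at hH ⊢
  obtain ⟨hac, hint⟩ := klDiv_ne_top_iff.mp hH.ne
  have hKL : ∫ x, llr Q P x ∂Q = n * (klDiv ν μ).toReal := by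
    rw [Measure.integral_llr_pi (fun _ => hac) (fun _ => hint),
      toReal_klDiv_of_measure_eq hac (by simp)]
    simp
  have hQP : Q ≪ P := Measure.absolutelyContinuous_pi fun _ => hac
  have key := log_measureReal_sub_le_log_measureReal hQP
    (Measure.integrable_llr_pi (fun _ => hac) (fun _ => hint)) hAmeas hpos
  rw [hKL] at key
  have hcompl : Q.real Bᶜ = 1 - Q.real B := probReal_compl_eq_one_sub hAmeas
  change -(klDiv ν μ).toReal * Q.real Bᶜ / Q.real B + 1 / (n : ℝ) * log (Q.real B)
      - 1 / (n * exp 1 * Q.real B) ≤ 1 / (n : ℝ) * log (P.real B * exp (n * (klDiv ν μ).toReal))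
  have hc : 0 < Q.real B := ENNReal.toReal_pos hpos.ne' (measure_ne_top Q B)
  have hp : 0 < P.real B := ENNReal.toReal_pos (fun h => hpos.ne' (hQP h)) (measure_ne_top P B)
  have hn' : (0 : ℝ) < n := by exact_mod_cast hn
  rw [hcompl, log_mul hp.ne' (exp_pos _).ne', log_exp]
  calc _ = 1 / (n : ℝ) * (log (Q.real B) - (n * (klDiv ν μ).toReal + (exp 1)⁻¹) / Q.real B
        + n * (klDiv ν μ).toReal) := by field_simp; ring
    _ ≤ _ := by gcongr

/-- Deuschel–Stroock lower bound: a change of measure estimate for the probability that the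
empirical measure belongs to a set `A` of probability measures. -/
theorem deuschel_stroock_lower_bound
    {X : Type*} [MetricSpace X] [PolishSpace X] [MeasurableSpace X] [BorelSpace X]
    (μ ν : Measure X) [IsProbabilityMeasure μ] [IsProbabilityMeasure ν]
    (n : ℕ) (hn : 1 ≤ n) (A : Set (Measure X))
    (hAmeas : MeasurableSet {x : Fin n → X | empMeasure x ∈ A})
    (hac : ν ≪ μ) (hH : relEntropy ν μ < ∞)
    (hpos : 0 < (Measure.pi fun _ : Fin n => ν) {x | empMeasure x ∈ A}) :
    (1 / (n : ℝ)) * Real.log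
        (((Measure.pi fun _ : Fin n => μ) {x | empMeasure x ∈ A}).toReal *
          Real.exp ((n : ℝ) * (relEntropy ν μ).toReal)) ≥
      -(relEntropy ν μ).toReal *
          ((Measure.pi fun _ : Fin n => ν) {x | empMeasure x ∉ A}).toReal /
          ((Measure.pi fun _ : Fin n => ν) {x | empMeasure x ∈ A}).toReal +
        (1 / (n : ℝ)) * Real.log
          ((Measure.pi fun _ : Fin n => ν) {x | empMeasure x ∈ A}).toReal -
        1 / ((n : ℝ) * Real.exp 1 *
          ((Measure.pi fun _ : Fin n => ν) {x | empMeasure x ∈ A}).toReal) :=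
  deuschel_stroock_lower_bound_general μ ν n hn A hAmeas hH hpos
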